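/- If e_1, e_2, …, e_k is a list of edges that form a directed cycle in a digraph X = (V, E), then for every coloring f : V → ℤ⁺: N(f, X) = Σ_{S ⊆ {e_1,…,e_k}, S ≠ ∅} (−1)^{|S|−1} N(f, X∖S), where X∖S = (V, E∖S). (Equivalently, W_X = Σ_{∅ ≠ S ⊆ {e_1,…,e_k}} (−1)^{|S|−1} W_{X∖S}.) -/
import Mathlib


/-- A `V`-listing `σ` (a bijection `Fin n ≃ V`) is `(f, X)`-friendly for the digraph with
edge set `E` and the coloring `f` if the colors are weakly increasing along the listing,
and strictly increase along every edge of the digraph. -/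
def Friendly {V : Type*} [Fintype V] (E : Set (V × V)) (f : V → ℕ+)
    (σ : Fin (Fintype.card V) ≃ V) : Prop :=
  Monotone (fun i => f (σ i)) ∧
  ∀ i : Fin (Fintype.card V), ∀ h : (i : ℕ) + 1 < Fintype.card V,
    (σ i, σ ⟨(i : ℕ) + 1, h⟩) ∈ E → f (σ i) < f (σ ⟨(i : ℕ) + 1, h⟩)

/-- `redeiBergeCount E f` is `N(f, X)`, the number of `(f, X)`-friendly `V`-listings
of the digraph `X = (V, E)`. -/
noncomputable def redeiBergeCount {V : Type*} [Fintype V] (E : Set (V × V)) (f : V → ℕ+) : ℕ :=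
  Nat.card {σ : Fin (Fintype.card V) ≃ V // Friendly E f σ}

open Finset

/-- `Ok f σ c` : edge `c` is not violated by the listing `σ`. -/
def Ok {V : Type*} [Fintype V] (f : V → ℕ+) (σ : Fin (Fintype.card V) ≃ V) (c : V × V) : Prop :=
  ∀ i : Fin (Fintype.card V), ∀ h : (i : ℕ) + 1 < Fintype.card V,
    σ i = c.1 → σ ⟨(i : ℕ) + 1, h⟩ = c.2 → f (σ i) < f (σ ⟨(i : ℕ) + 1, h⟩)

lemma friendly_iff {V : Type*} [Fintype V] (E : Set (V × V)) (f : V → ℕ+)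
    (σ : Fin (Fintype.card V) ≃ V) :
    Friendly E f σ ↔ Monotone (fun i => f (σ i)) ∧ ∀ c ∈ E, Ok f σ c := by
  constructor
  · rintro ⟨hm, h⟩
    refine ⟨hm, fun c hc i hi h1 h2 => h i hi ?_⟩
    rw [h1, h2]
    exact hc
  · rintro ⟨hm, h⟩
    exact ⟨hm, fun i hi hmem => h _ hmem i hi rfl rfl⟩

/-- If `e 0, e 1, …, e (k-1)` is a list of edges forming a directed cycle in the digraph
`X = (V, E)` (i.e. there are pairwise distinct vertices `w 0, …, w (k-1)` with
`e i = (w i, w (i+1 mod k)) ∈ E`), then for every coloring `f`: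
`N(f, X) = Σ_{∅ ≠ S ⊆ {e 0, …, e (k-1)}} (−1)^{|S|−1} N(f, X∖S)`. -/
theorem redeiBergeCount_cycle_decomposition {V : Type*} [Fintype V] [DecidableEq V]
    (E : Finset (V × V)) (k : ℕ) (hk : 0 < k) (e : Fin k → V × V) (w : Fin k → V)
    (hw : Function.Injective w)
    (hcyc : ∀ i : Fin k, e i = (w i, w ⟨((i : ℕ) + 1) % k, Nat.mod_lt _ hk⟩))
    (heE : ∀ i : Fin k, e i ∈ E) (f : V → ℕ+) :
    (redeiBergeCount (E : Set (V × V)) f : ℤ) =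
      ∑ S ∈ ((Finset.univ.image e).powerset.erase ∅),
        (-1 : ℤ) ^ (S.card - 1) * (redeiBergeCount ((E \ S : Finset (V × V)) : Set (V × V)) f : ℤ) := by
  classical
  set C : Finset (V × V) := Finset.univ.image e with hCdef
  have hC : C.Nonempty := ⟨e ⟨0, hk⟩, mem_image_of_mem _ (mem_univ _)⟩
  -- the cycle argument: no listing violates all the cycle edges
  have hcycle : ∀ σ : Fin (Fintype.card V) ≃ V, ¬ ∀ i : Fin k, ¬ Ok f σ (e i) := by
    intro σ hall
    have hpos : ∀ i : Fin k,
        (σ.symm (w ⟨((i : ℕ) + 1) % k, Nat.mod_lt _ hk⟩) : ℕ) = (σ.symm (w i) : ℕ) + 1 := by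
      intro i
      have := hall i
      rw [Ok] at this
      push_neg at this
      obtain ⟨j, hj, h1, h2, -⟩ := this
      rw [hcyc i] at h1 h2
      dsimp only at h1 h2
      have e1 : σ.symm (w i) = j := by rw [← h1]; simp
      have e2 : σ.symm (w ⟨((i : ℕ) + 1) % k, Nat.mod_lt _ hk⟩) = ⟨(j : ℕ) + 1, hj⟩ := by
        rw [← h2]; simp
      rw [e1, e2]
    obtain ⟨i0, -, hmax⟩ := Finset.exists_max_image Finset.univ
      (fun i : Fin k => (σ.symm (w i) : ℕ)) ⟨⟨0, hk⟩, mem_univ _⟩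
    have := hmax ⟨((i0 : ℕ) + 1) % k, Nat.mod_lt _ hk⟩ (mem_univ _)
    rw [hpos i0] at this
    omega
  -- rewrite counts as sums of indicators
  have hcount : ∀ E' : Finset (V × V), (redeiBergeCount (E' : Set (V × V)) f : ℤ) =
      ∑ σ : Fin (Fintype.card V) ≃ V,
        (if Friendly (E' : Set (V × V)) f σ then (1 : ℤ) else 0) := by
    intro E'
    rw [redeiBergeCount, Nat.card_eq_fintype_card, Fintype.card_subtype, Finset.card_filter]
    push_cast
    rfl
  simp only [hcount, Finset.mul_sum]
  rw [Finset.sum_comm]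
  refine Finset.sum_congr rfl fun σ _ => ?_
  -- per-listing identity
  by_cases hm : Monotone (fun i => f (σ i))
  · set B : Finset (V × V) := E.filter (fun c => ¬ Ok f σ c) with hBdef
    have hfr : ∀ S : Finset (V × V), Friendly ((E \ S : Finset (V × V)) : Set (V × V)) f σ ↔ B ⊆ S := by
      intro S
      rw [friendly_iff]
      constructor
      · rintro ⟨-, h⟩ c hc
        rw [hBdef, mem_filter] at hc
        by_contra hcS
        exact hc.2 (h c (by simp [hc.1, hcS]))
      · intro hBS
        refine ⟨hm, fun c hc => ?_⟩
        simp only [coe_sdiff, Set.mem_diff, mem_coe] at hc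
        by_contra hok
        exact hc.2 (hBS (by rw [hBdef, mem_filter]; exact ⟨hc.1, hok⟩))
    have hfrE : Friendly (E : Set (V × V)) f σ ↔ B = ∅ := by
      rw [friendly_iff]
      constructor
      · rintro ⟨-, h⟩
        rw [Finset.eq_empty_iff_forall_notMem]
        intro c hc
        rw [hBdef, mem_filter] at hc
        exact hc.2 (h c hc.1)
      · intro hB
        refine ⟨hm, fun c hc => ?_⟩
        by_contra hok
        have : c ∈ B := by rw [hBdef, mem_filter]; exact ⟨hc, hok⟩
        simp [hB] at this
    simp only [hfr]
    by_cases hB : B = ∅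
    · -- all edges ok: sum equals 1
      rw [if_pos (hfrE.2 hB)]
      simp only [hB, Finset.empty_subset, if_true, mul_one]
      have h2 : ∑ S ∈ C.powerset.erase ∅, ((-1 : ℤ) ^ S.card) = -1 := by
        have h0 := Finset.sum_erase_add (C.powerset) (fun S => (-1 : ℤ) ^ S.card)
          (Finset.mem_powerset.2 (Finset.empty_subset C))
        rw [Finset.sum_powerset_neg_one_pow_card_of_nonempty hC] at h0
        simp only [Finset.card_empty, pow_zero] at h0
        linarith
      have h3 : ∀ S ∈ C.powerset.erase ∅, ((-1 : ℤ) ^ (S.card - 1)) = -((-1 : ℤ) ^ S.card) := by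
        intro S hS
        have : S ≠ ∅ := Finset.ne_of_mem_erase hS
        have hc1 : 1 ≤ S.card := Finset.card_pos.2 (Finset.nonempty_iff_ne_empty.2 this)
        have hp : ((-1 : ℤ) ^ S.card) = ((-1 : ℤ) ^ (S.card - 1)) * (-1) := by
          rw [← pow_succ]
          congr 1
          omega
        rw [hp]
        ring
      rw [Finset.sum_congr rfl h3, Finset.sum_neg_distrib, h2]
      norm_num
    · -- B nonempty: Friendly E fails; show sum is 0
      rw [if_neg (fun h => hB (hfrE.1 h))]
      by_cases hBC : B ⊆ C
      · -- B ⊊ C since B = C is impossible by the cycle argument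
        have hBne : B ≠ C := by
          intro hEq
          apply hcycle σ
          intro i
          have : e i ∈ B := by rw [hEq]; exact mem_image_of_mem _ (mem_univ _)
          rw [hBdef, mem_filter] at this
          exact this.2
        have hCB : (C \ B).Nonempty := by
          rw [Finset.sdiff_nonempty]
          intro h
          exact hBne (Finset.Subset.antisymm hBC h)
        -- reindex S ↦ S \ B
        rw [← Finset.sum_filter_add_sum_filter_not (C.powerset.erase ∅)
          (fun S => B ⊆ S)]
        have hz2 : ∑ S ∈ (C.powerset.erase ∅).filter (fun S => ¬ B ⊆ S),
            ((-1 : ℤ) ^ (S.card - 1)) * (if B ⊆ S then (1:ℤ) else 0) = 0 := by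
          apply Finset.sum_eq_zero
          intro S hS
          rw [mem_filter] at hS
          rw [if_neg hS.2, mul_zero]
        rw [hz2, add_zero]
        have hsum : ∑ S ∈ (C.powerset.erase ∅).filter (fun S => B ⊆ S),
            ((-1 : ℤ) ^ (S.card - 1)) * (if B ⊆ S then (1:ℤ) else 0) =
            ∑ T ∈ (C \ B).powerset, ((-1 : ℤ) ^ (B.card - 1)) * ((-1 : ℤ) ^ T.card) := by
          apply Finset.sum_nbij' (fun S => S \ B) (fun T => T ∪ B)
          · intro S hS
            simp only [mem_filter, Finset.mem_erase, Finset.mem_powerset] at hS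
            exact Finset.mem_powerset.2 (Finset.sdiff_subset_sdiff hS.1.2 (le_refl B))
          · intro T hT
            rw [Finset.mem_powerset] at hT
            simp only [mem_filter, Finset.mem_erase, Finset.mem_powerset]
            refine ⟨⟨?_, ?_⟩, Finset.subset_union_right⟩
            · intro h
              have : B = ∅ := by
                rw [Finset.eq_empty_iff_forall_notMem]
                intro x hx
                have : x ∈ T ∪ B := Finset.mem_union_right _ hx
                simp [h] at this
              exact hB this
            · exact Finset.union_subset (hT.trans (Finset.sdiff_subset)) hBC
          · intro S hS
            simp only [mem_filter, Finset.mem_erase, Finset.mem_powerset] at hS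
            exact Finset.sdiff_union_of_subset hS.2
          · intro T hT
            rw [Finset.mem_powerset] at hT
            exact Finset.union_sdiff_cancel_right
              (Finset.disjoint_of_subset_left hT Finset.sdiff_disjoint)
          · intro S hS
            simp only [mem_filter, Finset.mem_erase, Finset.mem_powerset] at hS
            rw [if_pos hS.2, mul_one, Finset.card_sdiff_of_subset hS.2, ← pow_add]
            congr 1
            have h1 : 1 ≤ B.card := Finset.card_pos.2 (Finset.nonempty_iff_ne_empty.2 hB)
            have h2 : B.card ≤ S.card := Finset.card_le_card hS.2
            omega
        rw [hsum, ← Finset.mul_sum, Finset.sum_powerset_neg_one_pow_card_of_nonempty hCB, mul_zero]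
      · -- no S with B ⊆ S: all terms vanish
        symm
        apply Finset.sum_eq_zero
        intro S hS
        simp only [Finset.mem_erase, Finset.mem_powerset] at hS
        have : ¬ B ⊆ S := fun h => hBC (h.trans hS.2)
        rw [if_neg this, mul_zero]
  · -- not monotone: everything vanishes
    rw [if_neg (fun h => hm h.1)]
    symm
    apply Finset.sum_eq_zero
    intro S hS
    rw [if_neg (fun h : Friendly _ f σ => hm h.1), mul_zero]
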